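/- Let F_{ac}(x,y) = a·x·y + c·(x·y)‾ on C₀(-q) with N(c) - N(a) = 1. If N(a) ≠ 0 and c·a³ ∉ F·1, then the isotropy subgroup of F_{ac} inside the isometry group of N is trivial. -/

import Mathlib

/-!
Norm-preservation forces `u` to be `x ↦ w x` or `x ↦ w x̄` with `N(w) = 1`: polarizing `N`
shows that `u 1 · conj (u τ)` is a purely imaginary element `s τ` of norm `N(τ)`, so `s = ±1`.
Since `z ↦ z` and `z ↦ z̄` are linearly independent over `C₀(-q)`, intertwining `F_{ac}` with
`x ↦ w x` gives `w a = a w²`, hence `w = 1` when `a` is invertible; with `x ↦ w x̄` it gives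
`ā = a w` and `c̄ = c w̄³`, which makes `c a³` fixed by conjugation, i.e. a scalar.
-/

section QuadraticAlgebra

variable {𝕜 A : Type*} [Field 𝕜] [CommRing A] [Algebra 𝕜 A] {τ : A}

theorem exists_eq_algebraMap_add_algebraMap_mul (bA : Module.Basis (Fin 2) 𝕜 A)
    (hb0 : bA 0 = 1) (hb1 : bA 1 = τ) (x : A) :
    ∃ p q : 𝕜, x = algebraMap 𝕜 A p + algebraMap 𝕜 A q * τ := by
  refine ⟨bA.repr x 0, bA.repr x 1, ?_⟩
  conv_lhs => rw [← bA.sum_repr x]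
  simp [Fin.sum_univ_two, hb0, hb1, Algebra.smul_def]

theorem eq_zero_of_algebraMap_add_algebraMap_mul_eq_zero (bA : Module.Basis (Fin 2) 𝕜 A)
    (hb0 : bA 0 = 1) (hb1 : bA 1 = τ) {p q : 𝕜}
    (h : algebraMap 𝕜 A p + algebraMap 𝕜 A q * τ = 0) : p = 0 ∧ q = 0 := by
  have hbA : ⇑bA = ![1, τ] := by
    funext i
    fin_cases i <;> simp [hb0, hb1]
  have hpair := bA.linearIndependent
  rw [hbA, LinearIndependent.pair_iff] at hpair
  exact hpair p q (by simpa [Algebra.smul_def] using h)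

variable (bA : Module.Basis (Fin 2) 𝕜 A) (hb0 : bA 0 = 1) (hb1 : bA 1 = τ)
  {conj : A ≃ₐ[𝕜] A} (hconjτ : conj τ = -τ)
include bA hb0 hb1 hconjτ

theorem conj_conj (x : A) : conj (conj x) = x := by
  obtain ⟨p, q, rfl⟩ := exists_eq_algebraMap_add_algebraMap_mul bA hb0 hb1 x
  simp [hconjτ]

theorem exists_eq_algebraMap_of_conj_eq (h2 : (2 : 𝕜) ≠ 0) {w : A} (hw : conj w = w) :
    ∃ t : 𝕜, w = algebraMap 𝕜 A t := by
  obtain ⟨p, q, rfl⟩ := exists_eq_algebraMap_add_algebraMap_mul bA hb0 hb1 w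
  simp only [map_add, map_mul, AlgEquiv.commutes, hconjτ] at hw
  have h2q := (eq_zero_of_algebraMap_add_algebraMap_mul_eq_zero bA hb0 hb1
    (p := 0) (q := 2 * q) (by rw [map_zero, map_mul, map_ofNat]; linear_combination -hw)).2
  refine ⟨p, ?_⟩
  simp [(mul_eq_zero.mp h2q).resolve_left h2]

theorem exists_eq_algebraMap_mul_of_conj_eq_neg (h2 : (2 : 𝕜) ≠ 0) {w : A}
    (hw : conj w = -w) : ∃ s : 𝕜, w = algebraMap 𝕜 A s * τ := by
  obtain ⟨p, q, rfl⟩ := exists_eq_algebraMap_add_algebraMap_mul bA hb0 hb1 w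
  simp only [map_add, map_mul, AlgEquiv.commutes, hconjτ] at hw
  have h2p := (eq_zero_of_algebraMap_add_algebraMap_mul_eq_zero bA hb0 hb1
    (p := 2 * p) (q := 0) (by rw [map_zero, map_mul, map_ofNat]; linear_combination hw)).1
  refine ⟨q, ?_⟩
  simp [(mul_eq_zero.mp h2p).resolve_left h2]

theorem isUnit_of_mul_conj_ne_zero (h2 : (2 : 𝕜) ≠ 0) {a : A} (ha : a * conj a ≠ 0) :
    IsUnit a := by
  obtain ⟨t, ht⟩ := exists_eq_algebraMap_of_conj_eq bA hb0 hb1 hconjτ h2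
    (w := a * conj a) (by rw [map_mul, conj_conj bA hb0 hb1 hconjτ, mul_comm])
  have ht0 : t ≠ 0 := by
    rintro rfl
    exact ha (by simpa using ht)
  exact isUnit_of_mul_isUnit_left (ht ▸ ht0.isUnit.map (algebraMap 𝕜 A))

variable {β : 𝕜} (hβ : β ≠ 0) (hτ : τ * τ = algebraMap 𝕜 A (-β))
include hβ hτ

theorem exists_map_eq_algebraMap_mul_map_one_mul (h2 : (2 : 𝕜) ≠ 0) (u : A →ₗ[𝕜] A)
    (hN : ∀ x, u x * conj (u x) = x * conj x) :
    ∃ s : 𝕜, s * s = 1 ∧ u τ = algebraMap 𝕜 A s * u 1 * τ := by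
  have hconj := conj_conj bA hb0 hb1 hconjτ
  have hτ' : τ * τ = -algebraMap 𝕜 A β := by rw [hτ, map_neg]
  have hN1 : u 1 * conj (u 1) = 1 := by simpa using hN 1
  have hNτ : u τ * conj (u τ) = algebraMap 𝕜 A β := by
    simpa [hconjτ, hτ] using hN τ
  have hpolar : u 1 * conj (u τ) + u τ * conj (u 1) = 0 := by
    have h := hN (1 + τ)
    simp only [map_add, map_one, hconjτ] at h
    linear_combination h - hN1 - hNτ - hτ'
  obtain ⟨s, hs⟩ := exists_eq_algebraMap_mul_of_conj_eq_neg bA hb0 hb1 hconjτ h2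
    (w := u 1 * conj (u τ)) (by rw [map_mul, hconj]; linear_combination hpolar)
  -- `N(u 1 · conj (u τ)) = N(u 1) N(u τ) = β`, while `N(s τ) = s² β`.
  have hs2 : (s * s - 1) * β = 0 := by
    have hnorm := congrArg (fun z => z * conj z) hs
    simp only [map_mul, hconj, AlgEquiv.commutes, hconjτ] at hnorm
    refine (eq_zero_of_algebraMap_add_algebraMap_mul_eq_zero bA hb0 hb1 (q := 0) ?_).1
    simp only [map_mul, map_sub, map_one, map_zero, zero_mul, add_zero]
    linear_combination -hnorm + conj (u τ) * u τ * hN1 + hNτ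
      + algebraMap 𝕜 A s * algebraMap 𝕜 A s * hτ'
  refine ⟨-s, by linear_combination (mul_eq_zero.mp hs2).resolve_right hβ, ?_⟩
  have h := congrArg conj (show conj (u τ) = conj (u 1) * (algebraMap 𝕜 A s * τ) by
    linear_combination conj (u 1) * hs - conj (u τ) * hN1)
  simp only [hconj, map_mul, AlgEquiv.commutes, hconjτ] at h
  rw [h, map_neg]
  ring

theorem exists_mul_conj_eq_one_and_eq_mul_or_eq_mul_conj (h2 : (2 : 𝕜) ≠ 0)
    (u : A →ₗ[𝕜] A) (hN : ∀ x, u x * conj (u x) = x * conj x) :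
    ∃ w, w * conj w = 1 ∧ ((∀ x, u x = w * x) ∨ ∀ x, u x = w * conj x) := by
  refine ⟨u 1, by simpa using hN 1, ?_⟩
  obtain ⟨s, hs, huτ⟩ :=
    exists_map_eq_algebraMap_mul_map_one_mul bA hb0 hb1 hconjτ hβ hτ h2 u hN
  rcases mul_self_eq_one_iff.mp hs with rfl | rfl
  · left
    refine LinearMap.congr_fun (bA.ext (f₂ := LinearMap.mulLeft 𝕜 (u 1)) fun i => ?_)
    fin_cases i <;> simp [hb0, hb1, huτ]
  · right
    refine LinearMap.congr_fun
      (bA.ext (f₂ := LinearMap.mulLeft 𝕜 (u 1) ∘ₗ conj.toLinearMap) fun i => ?_)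
    fin_cases i <;> simp [hb0, hb1, huτ, hconjτ]

end QuadraticAlgebra

section Intertwining

variable {𝕜 A : Type*} [Field 𝕜] [CommRing A] [Algebra 𝕜 A] {τ : A} {conj : A ≃ₐ[𝕜] A}

theorem eq_zero_of_forall_mul_add_mul_conj_eq_zero (h2 : IsUnit (2 : A)) (hτ : IsUnit τ)
    (hconjτ : conj τ = -τ) {α γ : A} (h : ∀ z, α * z + γ * conj z = 0) : α = 0 ∧ γ = 0 := by
  have h1 : α + γ = 0 := by simpa using h 1
  have hτz := h τ
  rw [hconjτ] at hτz
  have hdiff : α - γ = 0 := hτ.mul_left_eq_zero.mp (by linear_combination hτz)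
  have hα : α = 0 := h2.mul_right_eq_zero.mp (by linear_combination h1 + hdiff)
  exact ⟨hα, by linear_combination h1 - hα⟩

theorem eq_one_of_forall_mul_intertwines (h2 : IsUnit (2 : A)) (hτ : IsUnit τ)
    (hconjτ : conj τ = -τ) {a c w : A} (ha : IsUnit a) (hw : w * conj w = 1)
    (hF : ∀ x, w * (a * x + c * conj x) = a * (w * x) * w + c * conj (w * x * w)) :
    w = 1 := by
  have hwa := (eq_zero_of_forall_mul_add_mul_conj_eq_zero h2 hτ hconjτ
    (α := w * a - a * w * w) (γ := w * c - c * conj w * conj w) fun z => by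
      have h := hF z
      rw [map_mul, map_mul] at h
      linear_combination h).1
  have hww : w * w = w :=
    sub_eq_zero.mp (ha.mul_right_eq_zero.mp (by linear_combination -hwa))
  exact (IsUnit.of_mul_eq_one _ hw).mul_eq_left.mp hww

theorem conj_mul_pow_three_of_forall_mul_conj_intertwines (h2 : IsUnit (2 : A))
    (hτ : IsUnit τ) (hconjτ : conj τ = -τ) (hconj : ∀ x, conj (conj x) = x) {a c w : A}
    (hw : w * conj w = 1)
    (hF : ∀ x, w * conj (a * x + c * conj x)
      = a * (w * conj x) * w + c * conj (w * conj x * w)) :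
    conj (c * a ^ 3) = c * a ^ 3 := by
  have hcoeff := eq_zero_of_forall_mul_add_mul_conj_eq_zero h2 hτ hconjτ
    (α := w * conj c - c * conj w * conj w) (γ := w * conj a - a * w * w) fun z => by
      have h := hF z
      simp only [map_mul, map_add, hconj] at h
      linear_combination h
  have hconja : conj a = a * w := by
    linear_combination conj w * hcoeff.2 + (a * w - conj a) * hw
  have hconjc : conj c = c * conj w ^ 3 := by
    linear_combination conj w * hcoeff.1 - conj c * hw
  rw [map_mul, map_pow, hconja, hconjc]
  linear_combination c * a ^ 3 * (w ^ 2 * conj w ^ 2 + w * conj w + 1) * hw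

end Intertwining

theorem stmt_12_general (𝕜 A : Type*) [Field 𝕜] (h2 : (2 : 𝕜) ≠ 0)
    [CommRing A] [Algebra 𝕜 A]
    (τ : A) (β : 𝕜) (hβ : β ≠ 0) (hτ : τ * τ = algebraMap 𝕜 A (-β))
    (bA : Module.Basis (Fin 2) 𝕜 A) (hb0 : bA 0 = 1) (hb1 : bA 1 = τ)
    (conj : A ≃ₐ[𝕜] A) (hconjτ : conj τ = -τ)
    (a c : A)
    (hNa : a * conj a ≠ 0)
    (hca : ∀ t : 𝕜, c * a ^ 3 ≠ algebraMap 𝕜 A t)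
    (u : A ≃ₗ[𝕜] A) :
    ((∀ x : A, u x * conj (u x) = x * conj x) ∧
      (∀ x y : A, u (a * x * y + c * conj (x * y))
        = a * u x * u y + c * conj (u x * u y))) ↔
      u = LinearEquiv.refl 𝕜 A := by
  have h2A : IsUnit (2 : A) := map_ofNat (algebraMap 𝕜 A) 2 ▸ h2.isUnit.map (algebraMap 𝕜 A)
  have hτA : IsUnit τ :=
    isUnit_of_mul_isUnit_left (hτ ▸ (neg_ne_zero.mpr hβ).isUnit.map (algebraMap 𝕜 A))
  refine ⟨fun ⟨hN, hF⟩ => ?_, by rintro rfl; exact ⟨fun _ => rfl, fun _ _ => rfl⟩⟩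
  rcases exists_mul_conj_eq_one_and_eq_mul_or_eq_mul_conj bA hb0 hb1 hconjτ hβ hτ h2
    u.toLinearMap hN with ⟨w, hw, hu | hu⟩ <;> simp only [LinearEquiv.coe_coe] at hu
  · have hw1 : w = 1 := eq_one_of_forall_mul_intertwines h2A hτA hconjτ
      (isUnit_of_mul_conj_ne_zero bA hb0 hb1 hconjτ h2 hNa) hw fun x => by
        simpa only [hu, mul_one] using hF x 1
    ext x
    simp [hu x, hw1]
  · have hfix : conj (c * a ^ 3) = c * a ^ 3 :=
      conj_mul_pow_three_of_forall_mul_conj_intertwines h2A hτA hconjτ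
        (conj_conj bA hb0 hb1 hconjτ) hw fun x => by
          simpa only [hu, mul_one, map_one] using hF x 1
    obtain ⟨t, ht⟩ := exists_eq_algebraMap_of_conj_eq bA hb0 hb1 hconjτ h2 hfix
    exact absurd ht (hca t)

/-- in the model `A` of `C₀(-q)`, let
`F_{ac}(x,y) = a·x·y + c·(x·y)‾` with `N(c) - N(a) = 1`.  If `N(a) ≠ 0` and
`c·a³ ∉ 𝕜·1`, then the isotropy subgroup of `F_{ac}` inside the isometry group
of `N` is trivial: a norm-preserving linear bijection `u` intertwining
`F_{ac}` with itself is the identity, and conversely. -/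
theorem stmt_12 (𝕜 A : Type*) [Field 𝕜] (h2 : (2 : 𝕜) ≠ 0) (h3 : (3 : 𝕜) ≠ 0)
    [CommRing A] [Algebra 𝕜 A]
    (τ : A) (β : 𝕜) (hβ : β ≠ 0) (hτ : τ * τ = algebraMap 𝕜 A (-β))
    (bA : Module.Basis (Fin 2) 𝕜 A) (hb0 : bA 0 = 1) (hb1 : bA 1 = τ)
    (conj : A ≃ₐ[𝕜] A) (hconjτ : conj τ = -τ)
    (a c : A) (hac : c * conj c - a * conj a = 1)
    (hNa : a * conj a ≠ 0)
    (hca : ∀ t : 𝕜, c * a ^ 3 ≠ algebraMap 𝕜 A t)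
    (u : A ≃ₗ[𝕜] A) :
    ((∀ x : A, u x * conj (u x) = x * conj x) ∧
      (∀ x y : A, u (a * x * y + c * conj (x * y))
        = a * u x * u y + c * conj (u x * u y))) ↔
      u = LinearEquiv.refl 𝕜 A :=
  stmt_12_general 𝕜 A h2 τ β hβ hτ bA hb0 hb1 conj hconjτ a c hNa hca u
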